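/- Let y₁,…,yₙ be reals with yⱼ ≥ 1 for each j, and define F : ℤⁿ → ℝ by F(x) = Πⱼ T_{|xⱼ|}(yⱼ), where T is the Chebyshev polynomial of the first kind extended to nonnegative indices via absolute value. Then for each j, F(x + eⱼ) + F(x − eⱼ) = 2yⱼ·F(x) for all x ∈ ℤⁿ. Consequently, if Σⱼ 2yⱼ = m² + 2n, then F solves the discretized Klein–Gordon equation (ΔF)(x) = m²·F(x), where (ΔF)(x) = Σⱼ(F(x+eⱼ)+F(x−eⱼ)−2F(x)). -/

import Mathlib

/-!
Each factor `k ↦ T_{|k|}(yⱼ) = T_k(yⱼ)` satisfies the three-term recurrence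
`T_{k+1}(y) + T_{k-1}(y) = 2y T_k(y)` on all of `ℤ`, and a shift in the `j`-th coordinate only
moves the `j`-th factor of the product, so `F` inherits the recurrence in each direction.
Summing over `j` turns the discrete Laplacian into multiplication by `∑ⱼ 2yⱼ - 2n = m²`.
-/

open Polynomial Polynomial.Chebyshev Finset

theorem Polynomial.Chebyshev.T_add_one_add_T_sub_one (R : Type*) [CommRing R] (n : ℤ) :
    T R (n + 1) + T R (n - 1) = 2 * X * T R n := by
  rw [T_add_one]
  ring

section ProductRecurrence

variable {ι : Type*} [Fintype ι] [DecidableEq ι]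

theorem prod_apply_add_single {M N : Type*} [AddCommMonoid M] [CommMonoid N] (f : ι → M → N)
    (x : ι → M) (j : ι) (a : M) :
    ∏ i, f i ((x + Pi.single j a : ι → M) i) = f j (x j + a) * ∏ i ∈ {j}ᶜ, f i (x i) := by
  rw [Fintype.prod_eq_mul_prod_compl j]
  congr 1
  · simp
  · refine prod_congr rfl fun i hi => ?_
    rw [Pi.add_apply, Pi.single_eq_of_ne (by simpa using hi), add_zero]

variable {R : Type*} [CommRing R]

theorem prod_apply_add_single_add_prod_apply_sub_single (f : ι → ℤ → R) (c : ι → R)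
    (hf : ∀ i k, f i (k + 1) + f i (k - 1) = c i * f i k) (x : ι → ℤ) (j : ι) :
    ∏ i, f i ((x + Pi.single j 1 : ι → ℤ) i) + ∏ i, f i ((x - Pi.single j 1 : ι → ℤ) i)
      = c j * ∏ i, f i (x i) := by
  rw [sub_eq_add_neg, ← Pi.single_neg, prod_apply_add_single, prod_apply_add_single,
    Fintype.prod_eq_mul_prod_compl j, ← add_mul, ← sub_eq_add_neg, hf, mul_assoc]

theorem sum_add_single_add_sub_single_sub_two_mul {F : (ι → ℤ) → R} (c : ι → R)
    (hF : ∀ j x, F (x + Pi.single j 1) + F (x - Pi.single j 1) = c j * F x) (x : ι → ℤ) :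
    ∑ j, (F (x + Pi.single j 1) + F (x - Pi.single j 1) - 2 * F x)
      = (∑ j, c j - 2 * Fintype.card ι) * F x := by
  simp only [hF, ← sub_mul, ← sum_mul, sum_sub_distrib, sum_const, card_univ, nsmul_eq_mul,
    mul_comm _ (2 : R)]

end ProductRecurrence

theorem chebyshev_product_solves_klein_gordon_general (n : ℕ) (y : Fin n → ℝ)
    (m : ℝ)
    (F : (Fin n → ℤ) → ℝ)
    (hF : ∀ x, F x = ∏ j : Fin n, (Polynomial.Chebyshev.T ℝ ((x j).natAbs)).eval (y j)) :
    (∀ j : Fin n, ∀ x : Fin n → ℤ,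
      F (x + Pi.single j 1) + F (x - Pi.single j 1) = 2 * y j * F x) ∧
    ((∑ j : Fin n, 2 * y j) = m ^ 2 + 2 * n →
      ∀ x : Fin n → ℤ,
        (∑ j : Fin n, (F (x + Pi.single j 1) + F (x - Pi.single j 1) - 2 * F x))
          = m ^ 2 * F x) := by
  have hF' : ∀ x, F x = ∏ j, (T ℝ (x j)).eval (y j) := fun x => by simp only [hF, T_natAbs]
  have hT : ∀ j k, (T ℝ (k + 1)).eval (y j) + (T ℝ (k - 1)).eval (y j)
      = 2 * y j * (T ℝ k).eval (y j) := fun j k => by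
    simpa using congrArg (eval (y j)) (T_add_one_add_T_sub_one ℝ k)
  have hrec : ∀ j x, F (x + Pi.single j 1) + F (x - Pi.single j 1) = 2 * y j * F x := by
    intro j x
    simp only [hF']
    exact prod_apply_add_single_add_prod_apply_sub_single (fun j k => (T ℝ k).eval (y j))
      (fun j => 2 * y j) hT x j
  refine ⟨hrec, fun hsum x => ?_⟩
  rw [sum_add_single_add_sub_single_sub_two_mul _ hrec, hsum, Fintype.card_fin]
  ring

theorem chebyshev_product_solves_klein_gordon (n : ℕ) (y : Fin n → ℝ)
    (hy : ∀ j, 1 ≤ y j) (m : ℝ)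
    (F : (Fin n → ℤ) → ℝ)
    (hF : ∀ x, F x = ∏ j : Fin n, (Polynomial.Chebyshev.T ℝ ((x j).natAbs)).eval (y j)) :
    (∀ j : Fin n, ∀ x : Fin n → ℤ,
      F (x + Pi.single j 1) + F (x - Pi.single j 1) = 2 * y j * F x) ∧
    ((∑ j : Fin n, 2 * y j) = m ^ 2 + 2 * n →
      ∀ x : Fin n → ℤ,
        (∑ j : Fin n, (F (x + Pi.single j 1) + F (x - Pi.single j 1) - 2 * F x))
          = m ^ 2 * F x) :=
  chebyshev_product_solves_klein_gordon_general n y m F hF
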